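/- Let J, J' be finite-colength monomial ideals in S = ℂ[y,z] with colengths l, l', and let h be the height of J'. Then dim_ℂ Hom_S(J, S/J') ≤ l + l' − t(J,J'), where t(J,J') = |{β ∈ ℕ² \ J̃ : β_z ≥ h}|. -/
import Mathlib

open MvPolynomial

/-- A monomial ideal: an ideal generated by a set of monomials. -/
def IsMonomialIdeal (J : Ideal (MvPolynomial (Fin 2) ℂ)) : Prop :=
  ∃ G : Set (Fin 2 →₀ ℕ),
    J = Ideal.span ((fun d => (monomial d (1 : ℂ) : MvPolynomial (Fin 2) ℂ)) '' G)

/-- The exponent of the monomial `y^a z^b` as an element of `Fin 2 →₀ ℕ`. -/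
noncomputable def expOf (β : ℕ × ℕ) : Fin 2 →₀ ℕ :=
  Finsupp.single 0 β.1 + Finsupp.single 1 β.2

namespace Cor213

abbrev S := MvPolynomial (Fin 2) ℂ

noncomputable def E (a b : ℕ) : Fin 2 →₀ ℕ :=
  Finsupp.single 0 a + Finsupp.single 1 b

noncomputable def M (a b : ℕ) : S := monomial (E a b) 1

@[simp] lemma E_apply0 (a b : ℕ) : E a b 0 = a := by
  simp [E, Finsupp.single_apply]

@[simp] lemma E_apply1 (a b : ℕ) : E a b 1 = b := by
  simp [E, Finsupp.single_apply]

lemma eq_E (m : Fin 2 →₀ ℕ) : m = E (m 0) (m 1) := by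
  ext i
  fin_cases i <;> simp

lemma E_inj {a b c d : ℕ} (h : E a b = E c d) : a = c ∧ b = d := by
  constructor
  · have := congrArg (fun f : Fin 2 →₀ ℕ => f 0) h; simpa using this
  · have := congrArg (fun f : Fin 2 →₀ ℕ => f 1) h; simpa using this

lemma E_add (a b c d : ℕ) : E a b + E c d = E (a + c) (b + d) := by
  ext i
  fin_cases i <;> simp

lemma E_le_iff {a b c d : ℕ} : E a b ≤ E c d ↔ a ≤ c ∧ b ≤ d := by
  constructor
  · intro h
    exact ⟨by simpa using h 0, by simpa using h 1⟩
  · intro ⟨h1, h2⟩ i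
    fin_cases i <;> simpa

lemma M_mul (a b c d : ℕ) : M a b * M c d = M (a + c) (b + d) := by
  simp [M, monomial_mul, E_add]

lemma E_single1 (n : ℕ) : E 0 n = Finsupp.single 1 n := by
  ext i; fin_cases i <;> simp [Finsupp.single_apply]

lemma E_single0 (n : ℕ) : E n 0 = Finsupp.single 0 n := by
  ext i; fin_cases i <;> simp [Finsupp.single_apply]

lemma X1_pow (n : ℕ) : (X 1 : S) ^ n = M 0 n := by
  rw [X_pow_eq_monomial, M, E_single1]

lemma X0_pow (n : ℕ) : (X 0 : S) ^ n = M n 0 := by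
  rw [X_pow_eq_monomial, M, E_single0]


section Ideals
variable {J : Ideal S}

/-- Upward closure; no monomiality needed. -/
lemma mem_of_le (h : M a b ∈ J) (hac : a ≤ c) (hbd : b ≤ d) : M c d ∈ J := by
  have : M c d = M (c - a) (d - b) * M a b := by
    rw [M_mul]
    congr 1 <;> omega
  rw [this]
  exact Ideal.mul_mem_left J _ h

/-- For a monomial ideal, monomials in the support of a member lie in the ideal. -/
lemma support_mem (hJ : IsMonomialIdeal J) {p : S} (hp : p ∈ J) {m : Fin 2 →₀ ℕ}
    (hm : m ∈ p.support) : (monomial m 1 : S) ∈ J := by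
  obtain ⟨G, rfl⟩ := hJ
  rw [mem_ideal_span_monomial_image] at hp ⊢
  intro xi hxi
  have hxm : xi = m := by
    have h1 : (monomial m (1:ℂ) : S).support = {m} := by
      rw [support_monomial, if_neg one_ne_zero]
    rw [h1] at hxi
    simpa using hxi
  subst hxm
  exact hp _ hm

/-- Monomials not in J give linearly independent classes mod J. -/
lemma li_classes (hJ : IsMonomialIdeal J) (Γ : Set (ℕ × ℕ))
    (hΓ : ∀ β ∈ Γ, M β.1 β.2 ∉ J) :
    LinearIndependent ℂ (fun β : Γ => Ideal.Quotient.mk J (M β.1.1 β.1.2)) := by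
  rw [linearIndependent_iff]
  intro l hl
  -- the polynomial
  set p : S := Finsupp.linearCombination ℂ (fun β : Γ => M β.1.1 β.1.2) l with hp
  have hpJ : p ∈ J := by
    have h2 : (Ideal.Quotient.mkₐ ℂ J).toLinearMap p = 0 := by
      rw [hp, Finsupp.apply_linearCombination]
      exact hl
    have : Ideal.Quotient.mk J p = 0 := h2
    rwa [Ideal.Quotient.eq_zero_iff_mem] at this
  ext β
  by_contra hne
  have hcoeff : coeff (E β.1.1 β.1.2) p = l β := by
    rw [hp, Finsupp.linearCombination_apply, Finsupp.sum, coeff_sum]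
    rw [Finset.sum_eq_single β]
    · rw [M, coeff_smul, coeff_monomial, if_pos rfl]
      simp
    · intro b _ hbne
      rw [M, coeff_smul, coeff_monomial, if_neg, smul_zero]
      intro he
      apply hbne
      obtain ⟨h1, h2⟩ := E_inj he
      exact Subtype.ext (Prod.ext h1 h2)
    · intro hβ
      simp [Finsupp.notMem_support_iff.mp hβ]
  have hsupp : E β.1.1 β.1.2 ∈ p.support := by
    rw [mem_support_iff, hcoeff]
    simpa using hne
  have := support_mem hJ hpJ hsupp
  exact hΓ β.1 β.2 this

end Ideals

section W
variable {J : Ideal S} (hJ : IsMonomialIdeal J)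
  [hfl : Module.Finite ℂ (S ⧸ J)]

include hJ hfl in
lemma exists_pow_y : ∃ A, M A 0 ∈ J := by
  by_contra hA
  push_neg at hA
  have := li_classes hJ {β : ℕ × ℕ | β.2 = 0} (fun β hβ => by
    obtain ⟨a, b⟩ := β
    simp only [Set.mem_setOf_eq] at hβ
    subst hβ
    exact hA a)
  have hfin : Finite {β : ℕ × ℕ | β.2 = 0} := this.finite
  have hinf : Infinite ({β : ℕ × ℕ | β.2 = 0} : Set (ℕ × ℕ)) :=
    Set.infinite_coe_iff.mpr (Set.infinite_of_injective_forall_mem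
      (f := fun a : ℕ => ((a, 0) : ℕ × ℕ))
      (fun a b h => by simpa using congrArg Prod.fst h)
      (fun a => rfl))
  exact hinf.not_finite hfin

include hJ hfl in
lemma exists_pow_z : ∃ B, M 0 B ∈ J := by
  by_contra hB
  push_neg at hB
  have hli := li_classes hJ {β : ℕ × ℕ | β.1 = 0} (fun β hβ => by
    obtain ⟨a, b⟩ := β
    simp only [Set.mem_setOf_eq] at hβ
    subst hβ
    exact hB b)
  have hfin : Finite {β : ℕ × ℕ | β.1 = 0} := hli.finite
  have hinf : Infinite ({β : ℕ × ℕ | β.1 = 0} : Set (ℕ × ℕ)) :=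
    Set.infinite_coe_iff.mpr (Set.infinite_of_injective_forall_mem
      (f := fun b : ℕ => ((0, b) : ℕ × ℕ))
      (fun a b h => by simpa using congrArg Prod.snd h)
      (fun a => rfl))
  exact hinf.not_finite hfin

end W

section Wdef
variable (J : Ideal S)

noncomputable def w (r : ℕ) : ℕ := sInf {a | M a r ∈ J}

variable {J}

lemma w_mem {A : ℕ} (hA : M A 0 ∈ J) (r : ℕ) : M (w J r) r ∈ J := by
  have hne : {a | M a r ∈ J}.Nonempty := ⟨A, mem_of_le hA le_rfl (Nat.zero_le _)⟩
  exact Nat.sInf_mem hne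

lemma w_le {a r : ℕ} (h : M a r ∈ J) : w J r ≤ a := Nat.sInf_le h

lemma mem_iff_w_le {A : ℕ} (hA : M A 0 ∈ J) {a r : ℕ} : M a r ∈ J ↔ w J r ≤ a := by
  constructor
  · exact w_le
  · intro h
    exact mem_of_le (w_mem hA r) h le_rfl

lemma w_anti {A : ℕ} (hA : M A 0 ∈ J) {r r' : ℕ} (h : r ≤ r') : w J r' ≤ w J r :=
  w_le (mem_of_le (w_mem hA r) le_rfl h)

lemma w_eq_zero {A B : ℕ} (hA : M A 0 ∈ J) (hB : M 0 B ∈ J) {r : ℕ} (h : B ≤ r) :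
    w J r = 0 :=
  Nat.le_zero.mp (w_le (mem_of_le hB le_rfl h))

end Wdef

section R
variable (J' : Ideal S) (w : ℕ → ℕ) (B : ℕ)

/-- The syzygy-relation map. -/
noncomputable def Rmap : (Fin (B+1) → S ⧸ J') →ₗ[S] (Fin B → S ⧸ J') :=
  LinearMap.pi fun i =>
    (LinearMap.lsmul S (S ⧸ J') (X 1)).comp (LinearMap.proj i.castSucc)
      - (LinearMap.lsmul S (S ⧸ J') ((X 0) ^ (w (i:ℕ) - w ((i:ℕ)+1)))).comp
          (LinearMap.proj i.succ)

noncomputable def Rc : (Fin (B+1) → S ⧸ J') →ₗ[ℂ] (Fin B → S ⧸ J') :=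
  (Rmap J' w B).restrictScalars ℂ

noncomputable def vN (γ : ℕ × ℕ) : S ⧸ J' := Ideal.Quotient.mk J' (M γ.1 γ.2)

noncomputable def qC (γ : ℕ × ℕ) (j : Fin B) :
    (Fin B → S ⧸ J') ⧸ LinearMap.range (Rc J' w B) :=
  Submodule.Quotient.mk (Pi.single j (vN J' γ))

variable {J' w B}

lemma smul_X1 (γa γb : ℕ) : (X 1 : S) • vN J' (γa, γb) = vN J' (γa, γb + 1) := by
  show Ideal.Quotient.mk J' (X 1 * M γa γb) = _
  rw [show (X 1 : S) = (X 1)^1 from (pow_one _).symm, X1_pow, M_mul, Nat.zero_add,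
    Nat.add_comm 1 γb]
  rfl

lemma smul_X0pow (n γa γb : ℕ) :
    (X 0 : S) ^ n • vN J' (γa, γb) = vN J' (γa + n, γb) := by
  show Ideal.Quotient.mk J' ((X 0)^n * M γa γb) = _
  rw [X0_pow, M_mul, Nat.zero_add, Nat.add_comm n γa]
  rfl

lemma Rmap_single (s : Fin (B+1)) (γa γb : ℕ) :
    Rmap J' w B (Pi.single s (vN J' (γa, γb)))
      = ((if h : (s : ℕ) < B then Pi.single (⟨s, h⟩ : Fin B) (vN J' (γa, γb + 1)) else 0)
          : Fin B → S ⧸ J')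
        - ((if h : 0 < (s : ℕ) then
            Pi.single (⟨(s:ℕ) - 1, by omega⟩ : Fin B)
              (vN J' (γa + (w ((s:ℕ)-1) - w (s:ℕ)), γb)) else 0) : Fin B → S ⧸ J') := by
  funext i
  simp only [Rmap, LinearMap.pi_apply, LinearMap.sub_apply, LinearMap.comp_apply,
    LinearMap.proj_apply, LinearMap.lsmul_apply, Pi.sub_apply]
  have T1 : ((if h : (s : ℕ) < B then Pi.single (⟨s, h⟩ : Fin B) (vN J' (γa, γb + 1)) else 0)
      : Fin B → S ⧸ J') i
      = if ((s:ℕ) < B ∧ (i:ℕ) = (s:ℕ)) then vN J' (γa, γb + 1) else 0 := by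
    by_cases h : (s:ℕ) < B
    · rw [dif_pos h, Pi.single_apply]
      by_cases h2 : (i:ℕ) = (s:ℕ)
      · rw [if_pos (Fin.ext h2 : i = ⟨(s:ℕ), h⟩), if_pos ⟨h, h2⟩]
      · rw [if_neg (fun he => h2 (by simpa using congrArg Fin.val he)),
          if_neg (fun hc => h2 hc.2)]
    · rw [dif_neg h, if_neg (fun hc => h hc.1)]; rfl
  have T2 : ((if h : 0 < (s : ℕ) then
      Pi.single (⟨(s:ℕ) - 1, by omega⟩ : Fin B)
        (vN J' (γa + (w ((s:ℕ)-1) - w (s:ℕ)), γb)) else 0) : Fin B → S ⧸ J') i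
      = if (0 < (s:ℕ) ∧ (i:ℕ) = (s:ℕ) - 1) then
          vN J' (γa + (w ((s:ℕ)-1) - w (s:ℕ)), γb) else 0 := by
    by_cases h : 0 < (s:ℕ)
    · rw [dif_pos h, Pi.single_apply]
      by_cases h2 : (i:ℕ) = (s:ℕ) - 1
      · rw [if_pos (Fin.ext h2 : i = ⟨(s:ℕ)-1, by omega⟩), if_pos ⟨h, h2⟩]
      · rw [if_neg (fun he => h2 (by simpa using congrArg Fin.val he)),
          if_neg (fun hc => h2 hc.2)]
    · rw [dif_neg h, if_neg (fun hc => h hc.1)]; rfl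
  rw [T1, T2]
  have S1 : (Pi.single s (vN J' (γa, γb)) : Fin (B+1) → S ⧸ J') i.castSucc
      = if ((i:ℕ) = (s:ℕ)) then vN J' (γa, γb) else 0 := by
    rw [Pi.single_apply]
    congr 1
    simp only [eq_iff_iff]
    rw [Fin.ext_iff]
    exact Iff.rfl
  have S2 : (Pi.single s (vN J' (γa, γb)) : Fin (B+1) → S ⧸ J') i.succ
      = if ((i:ℕ) + 1 = (s:ℕ)) then vN J' (γa, γb) else 0 := by
    rw [Pi.single_apply]
    congr 1
    simp only [eq_iff_iff]
    rw [Fin.ext_iff]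
    exact Iff.rfl
  rw [S1, S2]
  by_cases h1 : (i:ℕ) = (s:ℕ)
  · have hsB : (s:ℕ) < B := h1 ▸ i.isLt
    rw [if_pos h1, if_neg (by omega : ¬ ((i:ℕ) + 1 = (s:ℕ))), if_pos ⟨hsB, h1⟩,
      if_neg (by omega : ¬ (0 < (s:ℕ) ∧ (i:ℕ) = (s:ℕ) - 1))]
    rw [smul_X1, smul_zero, sub_zero]
  · rw [if_neg h1]
    by_cases h2 : (i:ℕ) + 1 = (s:ℕ)
    · rw [if_pos h2, if_neg (by omega : ¬ ((s:ℕ) < B ∧ (i:ℕ) = (s:ℕ))),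
        if_pos ⟨by omega, by omega⟩]
      have e3 : w ((s:ℕ)-1) = w (i:ℕ) := by congr 1; omega
      have e4 : w (s:ℕ) = w ((i:ℕ)+1) := by congr 1; omega
      rw [e3, e4, smul_X0pow, smul_zero, zero_sub]
    · rw [if_neg h2, if_neg (by omega : ¬ ((s:ℕ) < B ∧ (i:ℕ) = (s:ℕ))),
        if_neg (by omega : ¬ (0 < (s:ℕ) ∧ (i:ℕ) = (s:ℕ) - 1))]
      simp


lemma rel0 {γa γb : ℕ} (hmem : M γa γb ∈ J') (j : Fin B) :
    qC J' w B (γa, γb) j = 0 := by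
  have : vN J' (γa, γb) = 0 := by
    rw [vN, Ideal.Quotient.eq_zero_iff_mem]
    exact hmem
  rw [qC, this, Pi.single_zero]
  exact Submodule.Quotient.mk_zero _

lemma relMid {s : ℕ} (h0 : 0 < s) (hB : s < B) (γa γb : ℕ) :
    qC J' w B (γa, γb + 1) ⟨s, hB⟩
      = qC J' w B (γa + (w (s-1) - w s), γb) ⟨s - 1, by omega⟩ := by
  rw [qC, qC, Submodule.Quotient.eq]
  refine ⟨Pi.single (⟨s, by omega⟩ : Fin (B+1)) (vN J' (γa, γb)), ?_⟩
  show Rmap J' w B _ = _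
  rw [Rmap_single]
  first
  | rfl
  | simp only [dif_pos (show ((⟨s, by omega⟩ : Fin (B+1)) : ℕ) < B from hB),
      dif_pos (show 0 < ((⟨s, by omega⟩ : Fin (B+1)) : ℕ) from h0)]

lemma relBot (hB : 0 < B) (γa γb : ℕ) :
    qC J' w B (γa, γb + 1) ⟨0, hB⟩ = 0 := by
  rw [qC, ← Submodule.Quotient.mk_zero (LinearMap.range (Rc J' w B)), Submodule.Quotient.eq]
  refine ⟨Pi.single (⟨0, by omega⟩ : Fin (B+1)) (vN J' (γa, γb)), ?_⟩
  show Rmap J' w B _ = _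
  rw [Rmap_single]
  rw [dif_pos (show ((⟨0, by omega⟩ : Fin (B+1)) : ℕ) < B from hB)]
  rw [dif_neg (show ¬ 0 < ((⟨0, by omega⟩ : Fin (B+1)) : ℕ) by simp)]
  all_goals simp

lemma relTop (hB : 0 < B) (γa γb : ℕ) :
    qC J' w B (γa + (w (B-1) - w B), γb) ⟨B - 1, by omega⟩ = 0 := by
  rw [qC, ← Submodule.Quotient.mk_zero (LinearMap.range (Rc J' w B)), Submodule.Quotient.eq]
  refine ⟨-Pi.single (⟨B, by omega⟩ : Fin (B+1)) (vN J' (γa, γb)), ?_⟩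
  show Rmap J' w B _ = _
  rw [map_neg, Rmap_single]
  rw [dif_neg (show ¬ ((⟨B, by omega⟩ : Fin (B+1)) : ℕ) < B by simp)]
  rw [dif_pos (show 0 < ((⟨B, by omega⟩ : Fin (B+1)) : ℕ) from hB)]
  all_goals simp

section Inductions
variable (hanti : ∀ r, w (r+1) ≤ w r) (hwB : w B = 0) {h : ℕ} (hz : M 0 h ∈ J')

include hanti in
lemma w_mono {r r' : ℕ} (hrr : r ≤ r') : w r' ≤ w r := by
  induction r' with
  | zero => cases Nat.le_zero.mp hrr; exact le_rfl
  | succ n ih =>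
    rcases Nat.lt_or_ge r (n+1) with hlt | hge
    · exact le_trans (hanti n) (ih (by omega))
    · have : r = n + 1 := by omega
      subst this; exact le_rfl

include hanti hwB in
lemma w_zero {r : ℕ} (hr : B ≤ r) : w r = 0 :=
  Nat.le_zero.mp (hwB ▸ w_mono hanti hr)

/-- Case B: second exponent exceeds the row index: the class vanishes. -/
lemma caseB : ∀ r (hr : r < B) γa γb, r + 1 ≤ γb →
    qC J' w B (γa, γb) ⟨r, hr⟩ = 0 := by
  intro r
  induction r with
  | zero =>
    intro hr γa γb hγb
    obtain ⟨γb', rfl⟩ : ∃ γb', γb = γb' + 1 := ⟨γb - 1, by omega⟩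
    exact relBot hr γa γb'
  | succ n ih =>
    intro hr γa γb hγb
    obtain ⟨γb', rfl⟩ : ∃ γb', γb = γb' + 1 := ⟨γb - 1, by omega⟩
    rw [relMid (by omega) hr γa γb']
    have : qC J' w B (γa + (w (n+1-1) - w (n+1)), γb') ⟨n+1-1, by omega⟩
        = qC J' w B (γa + (w n - w (n+1)), γb') ⟨n, by omega⟩ := by
      congr 1 <;> simp
    rw [this]
    exact ih (by omega) _ γb' (by omega)

include hanti in
/-- Case C: first exponent at least w r: the class vanishes. -/
lemma caseC : ∀ t r (hr : r < B) γa γb, B - 1 - r = t → γb ≤ r → w r ≤ γa →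
    qC J' w B (γa, γb) ⟨r, hr⟩ = 0 := by
  intro t
  induction t with
  | zero =>
    intro r hr γa γb ht hγb hγa
    have hrB : r = B - 1 := by omega
    subst hrB
    have e1 : γa = (γa - (w (B-1) - w B)) + (w (B-1) - w B) := by
      have := hanti (B-1)
      have hB1 : w ((B-1)+1) ≤ w (B-1) := this
      omega
    rw [show (γa, γb) = ((γa - (w (B-1) - w B)) + (w (B-1) - w B), γb) by rw [← e1]]
    exact relTop (by omega) _ γb
  | succ t ih =>
    intro r hr γa γb ht hγb hγa
    have hr1 : r + 1 < B := by omega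
    have hd : w r - w (r+1) ≤ γa := by
      have := hanti r
      omega
    have e1 : γa = (γa - (w r - w (r+1))) + (w (r+1-1) - w (r+1)) := by
      have := hanti r
      simp only [Nat.add_sub_cancel]
      omega
    rw [show (γa, γb) = ((γa - (w r - w (r+1))) + (w (r+1-1) - w (r+1)), γb) by rw [← e1]]
    rw [show (⟨r, hr⟩ : Fin B) = ⟨r + 1 - 1, by omega⟩ by apply Fin.ext; simp]
    rw [← relMid (by omega) hr1]
    refine ih (r+1) hr1 _ (γb+1) (by omega) (by omega) ?_
    have := hanti r
    omega

/-- The designated spanning vectors. -/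
noncomputable def theta (J' : Ideal S) (w : ℕ → ℕ) (B : ℕ) (β : ℕ × ℕ) :
    (Fin B → S ⧸ J') ⧸ LinearMap.range (Rc J' w B) :=
  if hb : β.2 < B then qC J' w B (w β.2 - β.1 - 1, 0) ⟨β.2, hb⟩ else 0

noncomputable def Vset (J' : Ideal S) (w : ℕ → ℕ) (B h : ℕ) :
    Set ((Fin B → S ⧸ J') ⧸ LinearMap.range (Rc J' w B)) :=
  theta J' w B '' {β : ℕ × ℕ | β.1 < w β.2 ∧ ¬ β.1 < w (β.2 + h)}

include hanti hwB hz in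
/-- Case D: the main walk towards the designated representative or a kill. -/
lemma caseD (β : ℕ × ℕ) (hβ : β.1 < w β.2) (tgt : ℕ)
    (htgt : tgt = if β.1 < w (β.2 + h) then β.2 + h else β.2) :
    ∀ t r (hr : r < B) γa γb,
      γa + β.1 + 1 = w r → γb + β.2 = r → Nat.dist r tgt = t →
      qC J' w B (γa, γb) ⟨r, hr⟩ ∈ Submodule.span ℂ (Vset J' w B h) := by
  intro t
  induction t with
  | zero =>
    intro r hr γa γb hinva hinvb hdist
    rw [Nat.dist] at hdist
    have hrt : r = tgt := by omega
    by_cases hD : β.1 < w (β.2 + h)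
    · -- kill: γb = h, z^h divides
      have htg : tgt = β.2 + h := by rw [htgt, if_pos hD]
      have hγb : γb = h := by omega
      subst hγb
      rw [rel0 (mem_of_le hz (Nat.zero_le _) le_rfl)]
      exact Submodule.zero_mem _
    · -- designated representative
      have htg : tgt = β.2 := by rw [htgt, if_neg hD]
      have hγb : γb = 0 := by omega
      have hγa : γa = w β.2 - β.1 - 1 := by
        have hrβ : r = β.2 := by omega
        rw [hrβ] at hinva
        omega
      subst hγb
      apply Submodule.subset_span
      refine ⟨β, ⟨hβ, hD⟩, ?_⟩
      rw [theta, dif_pos (show β.2 < B by omega)]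
      congr 1
      · rw [hγa]
      · apply Fin.ext
        show β.2 = r
        omega
  | succ t ih =>
    intro r hr γa γb hinva hinvb hdist
    rcases Nat.lt_or_ge r tgt with hlt | hge
    · -- move up
      have hD : β.1 < w (β.2 + h) := by
        by_contra hD
        rw [htgt, if_neg hD] at hlt
        omega
      have htg : tgt = β.2 + h := by rw [htgt, if_pos hD]
      have htB : tgt < B := by
        by_contra hc
        push_neg at hc
        have : w tgt = 0 := w_zero hanti hwB hc
        rw [htg] at this
        omega
      have hr1 : r + 1 < B := by omega
      have hwr1 : β.1 + 1 ≤ w (r+1) := by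
        have hle : w tgt ≤ w (r+1) := w_mono hanti (by omega)
        rw [htg] at hle
        omega
      have hd : w r - w (r+1) ≤ γa := by
        have := hanti r
        omega
      have e1 : γa = (γa - (w r - w (r+1))) + (w (r+1-1) - w (r+1)) := by
        have := hanti r
        simp only [Nat.add_sub_cancel]
        omega
      rw [show (γa, γb) = ((γa - (w r - w (r+1))) + (w (r+1-1) - w (r+1)), γb) by rw [← e1]]
      rw [show (⟨r, hr⟩ : Fin B) = ⟨r + 1 - 1, by omega⟩ by apply Fin.ext; simp]
      rw [← relMid (by omega) hr1]
      refine ih (r+1) hr1 _ (γb+1) ?_ (by omega) ?_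
      · have := hanti r
        omega
      · rw [Nat.dist] at hdist ⊢
        omega
    · -- move down
      have htr : tgt < r := by
        rcases Nat.lt_or_ge tgt r with h1 | h1
        · exact h1
        · have : tgt = r := by omega
          rw [Nat.dist] at hdist
          omega
      have hβ2 : β.2 ≤ tgt := by
        rw [htgt]
        split <;> omega
      have hγb : 0 < γb := by omega
      obtain ⟨γb', rfl⟩ : ∃ γb', γb = γb' + 1 := ⟨γb - 1, by omega⟩
      have hr0 : 0 < r := by omega
      rw [relMid hr0 hr γa γb']
      refine ih (r-1) (by omega) _ γb' ?_ (by omega) ?_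
      · have hm : w r ≤ w (r-1) := w_mono hanti (by omega)
        omega
      · rw [Nat.dist] at hdist ⊢
        omega

include hanti hwB hz in
lemma span_all (r : ℕ) (hr : r < B) (γa γb : ℕ) :
    qC J' w B (γa, γb) ⟨r, hr⟩ ∈ Submodule.span ℂ (Vset J' w B h) := by
  rcases Nat.lt_or_ge r γb with h1 | h1
  · rw [caseB r hr γa γb (by omega)]
    exact Submodule.zero_mem _
  · rcases Nat.lt_or_ge γa (w r) with h2 | h2
    · exact caseD hanti hwB hz (w r - γa - 1, r - γb)
        (by
          show w r - γa - 1 < w (r - γb)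
          have : w r ≤ w (r - γb) := w_mono hanti (by omega)
          omega)
        _ rfl (Nat.dist r _) r hr γa γb (by omega) (by omega) rfl
    · rw [caseC hanti (B - 1 - r) r hr γa γb rfl (by omega) h2]
      exact Submodule.zero_mem _

include hanti hwB hz in
lemma top_le_span :
    ⊤ ≤ Submodule.span ℂ (Vset J' w B h) := by
  intro x _
  obtain ⟨y, rfl⟩ := Submodule.Quotient.mk_surjective _ x
  have hy : y = ∑ j : Fin B, Pi.single j (y j) := by
    rw [Finset.univ_sum_single]
  show (LinearMap.range (Rc J' w B)).mkQ y ∈ _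
  rw [hy, map_sum]
  refine Submodule.sum_mem _ (fun j _ => ?_)
  obtain ⟨p, hp⟩ := Ideal.Quotient.mk_surjective (y j)
  rw [← hp]
  let ΦJ : S →ₗ[ℂ] (S ⧸ J') := (Ideal.Quotient.mkₐ ℂ J').toLinearMap
  let Φs : (S ⧸ J') →ₗ[ℂ] (Fin B → S ⧸ J') := LinearMap.single ℂ (fun _ => S ⧸ J') j
  let Φq := (LinearMap.range (Rc J' w B)).mkQ
  show Φq (Φs (ΦJ p)) ∈ _
  rw [MvPolynomial.as_sum p, map_sum, map_sum, map_sum]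
  refine Submodule.sum_mem _ (fun m _ => ?_)
  have hsm : (monomial m (coeff m p) : S) = (coeff m p) • M (m 0) (m 1) := by
    rw [M, ← eq_E m, smul_monomial, smul_eq_mul, mul_one]
  rw [hsm, map_smul, map_smul, map_smul]
  refine Submodule.smul_mem _ _ ?_
  have hs := span_all hanti hwB hz (j : ℕ) j.isLt (m 0) (m 1)
  have : qC J' w B (m 0, m 1) ⟨(j : ℕ), j.isLt⟩ = Φq (Φs (ΦJ (M (m 0) (m 1)))) := by
    rw [qC]
    congr 1
  rwa [this] at hs

end Inductions
end R

section Hom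
variable {J' : Ideal S} {w : ℕ → ℕ} {B : ℕ} {J : Ideal S}

/-- Evaluation of a homomorphism on the distinguished generators. -/
noncomputable def ev (hw_mem : ∀ r : ℕ, M (w r) r ∈ J) :
    (J →ₗ[S] S ⧸ J') →ₗ[ℂ] (Fin (B+1) → S ⧸ J') where
  toFun φ := fun r => φ ⟨M (w (r:ℕ)) (r:ℕ), hw_mem (r:ℕ)⟩
  map_add' φ ψ := by funext r; simp
  map_smul' c φ := by funext r; simp

lemma ev_inj (hw_mem : ∀ r : ℕ, M (w r) r ∈ J)
    (hgen : J = Ideal.span (Set.range fun r : Fin (B+1) => M (w (r:ℕ)) (r:ℕ))) :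
    Function.Injective (ev (J' := J') (B := B) hw_mem) := by
  rw [injective_iff_map_eq_zero]
  intro χ hχ
  have h0 : ∀ r : Fin (B+1), χ ⟨M (w (r:ℕ)) (r:ℕ), hw_mem (r:ℕ)⟩ = 0 := by
    intro r
    exact congrFun hχ r
  apply LinearMap.ext
  rintro ⟨u, hu⟩
  have hu' : u ∈ Ideal.span (Set.range fun r : Fin (B+1) => M (w (r:ℕ)) (r:ℕ)) := by
    rw [← hgen]; exact hu
  have key : ∀ (hh : u ∈ J), χ ⟨u, hh⟩ = 0 := by
    induction hu' using Submodule.span_induction with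
    | mem x hx =>
      obtain ⟨r, rfl⟩ := hx
      intro hh
      have : (⟨M (w (r:ℕ)) (r:ℕ), hh⟩ : J) = ⟨M (w (r:ℕ)) (r:ℕ), hw_mem (r:ℕ)⟩ :=
        Subtype.ext rfl
      rw [this]
      exact h0 r
    | zero =>
      intro hh
      have : (⟨(0:S), hh⟩ : J) = 0 := Subtype.ext rfl
      rw [this, map_zero]
    | add x y hx hy ihx ihy =>
      intro hh
      have hxJ : x ∈ J := by rw [hgen]; exact hx
      have hyJ : y ∈ J := by rw [hgen]; exact hy
      have : (⟨x + y, hh⟩ : J) = ⟨x, hxJ⟩ + ⟨y, hyJ⟩ := Subtype.ext rfl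
      rw [this, map_add, ihx hxJ, ihy hyJ, add_zero]
    | smul a x hx ihx =>
      intro hh
      have hxJ : x ∈ J := by rw [hgen]; exact hx
      have : (⟨a • x, hh⟩ : J) = a • ⟨x, hxJ⟩ := Subtype.ext rfl
      rw [this, map_smul, ihx hxJ, smul_zero]
  exact key hu

lemma range_ev_le_ker (hw_mem : ∀ r : ℕ, M (w r) r ∈ J)
    (hanti : ∀ r, w (r+1) ≤ w r) :
    LinearMap.range (ev (J' := J') (B := B) hw_mem) ≤ LinearMap.ker (Rc J' w B) := by
  rintro _ ⟨φ, rfl⟩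
  rw [LinearMap.mem_ker]
  show Rmap J' w B (ev hw_mem φ) = 0
  funext i
  simp only [Rmap, LinearMap.pi_apply, LinearMap.sub_apply, LinearMap.comp_apply,
    LinearMap.proj_apply, LinearMap.lsmul_apply, Pi.zero_apply]
  show (X 1 : S) • φ _ - (X 0 : S)^(w (i:ℕ) - w ((i:ℕ)+1)) • φ _ = 0
  rw [← map_smul, ← map_smul, ← map_sub, ← map_zero φ]
  congr 1
  apply Subtype.ext
  show (X 1 : S) • M (w ((i:ℕ))) ((i:ℕ)) -
      (X 0 : S)^(w (i:ℕ) - w ((i:ℕ)+1)) • M (w ((i:ℕ)+1)) ((i:ℕ)+1) = 0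
  have e1 : (X 1 : S) • M (w (i:ℕ)) (i:ℕ) = M (w (i:ℕ)) ((i:ℕ)+1) := by
    show (X 1 : S) * M (w (i:ℕ)) (i:ℕ) = _
    rw [show (X 1 : S) = (X 1)^1 from (pow_one _).symm, X1_pow, M_mul, Nat.zero_add,
      Nat.add_comm 1 (i:ℕ)]
  have e2 : (X 0 : S)^(w (i:ℕ) - w ((i:ℕ)+1)) • M (w ((i:ℕ)+1)) ((i:ℕ)+1)
      = M (w (i:ℕ)) ((i:ℕ)+1) := by
    show (X 0 : S)^(w (i:ℕ) - w ((i:ℕ)+1)) * M (w ((i:ℕ)+1)) ((i:ℕ)+1) = _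
    rw [X0_pow, M_mul, Nat.zero_add]
    congr 1
    have := hanti (i:ℕ)
    omega
  rw [e1, e2, sub_self]

end Hom


end Cor213

open Cor213 in
/-- Corollary 2.13: for monomial ideals `J, J'` of finite colengths `l, l'` in
`S = ℂ[y,z]`, with `h` the height of `J'` (minimal with `z^h ∈ J'`),
`dim_ℂ Hom_S(J, S/J') ≤ l + l' − t(J,J')`, where
`t(J,J') = |{β ∈ ℕ² \ J̃ : β_z ≥ h}|`. -/
theorem hom_dim_le_sub_t (J J' : Ideal (MvPolynomial (Fin 2) ℂ))
    (hJ : IsMonomialIdeal J) (hJ' : IsMonomialIdeal J')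
    (l l' : ℕ)
    (hfl : Module.Finite ℂ (MvPolynomial (Fin 2) ℂ ⧸ J))
    (hfl' : Module.Finite ℂ (MvPolynomial (Fin 2) ℂ ⧸ J'))
    (hl : Module.finrank ℂ (MvPolynomial (Fin 2) ℂ ⧸ J) = l)
    (hl' : Module.finrank ℂ (MvPolynomial (Fin 2) ℂ ⧸ J') = l')
    (h : ℕ) (hh : (X 1 : MvPolynomial (Fin 2) ℂ) ^ h ∈ J')
    (hhmin : ∀ n < h, (X 1 : MvPolynomial (Fin 2) ℂ) ^ n ∉ J') :
    Module.finrank ℂ (J →ₗ[MvPolynomial (Fin 2) ℂ] (MvPolynomial (Fin 2) ℂ ⧸ J'))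
      ≤ l + l' -
        Set.ncard {β : ℕ × ℕ |
          (monomial (expOf β) (1 : ℂ) : MvPolynomial (Fin 2) ℂ) ∉ J ∧ h ≤ β.2} := by
  classical
  obtain ⟨A, hA⟩ := exists_pow_y hJ
  obtain ⟨B, hB⟩ := exists_pow_z hJ
  set w : ℕ → ℕ := Cor213.w J with hwdef
  have hw_mem : ∀ r : ℕ, Cor213.M (w r) r ∈ J := w_mem hA
  have hanti : ∀ r, w (r+1) ≤ w r := fun r => w_anti hA (Nat.le_succ r)
  have hwB : w B = 0 := w_eq_zero hA hB le_rfl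
  have hz : Cor213.M 0 h ∈ J' := by rw [← X1_pow]; exact hh
  -- the generators of J
  have hgen : J = Ideal.span (Set.range fun r : Fin (B+1) => Cor213.M (w (r:ℕ)) (r:ℕ)) := by
    apply le_antisymm
    · obtain ⟨G, hG⟩ := hJ
      conv_lhs => rw [hG]
      rw [Ideal.span_le]
      rintro x ⟨d, hdG, rfl⟩
      have hdJ : Cor213.M (d 0) (d 1) ∈ J := by
        rw [Cor213.M, ← eq_E d, hG]
        exact Ideal.subset_span ⟨d, hdG, rfl⟩
      have hwle : w (d 1) ≤ d 0 := w_le hdJ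
      have hrw : w (min (d 1) B) ≤ d 0 := by
        rcases le_total (d 1) B with hc | hc
        · rw [min_eq_left hc]; exact hwle
        · rw [min_eq_right hc, hwB]; exact Nat.zero_le _
      have hkey : (fun d => (monomial d (1:ℂ) : MvPolynomial (Fin 2) ℂ)) d
          = Cor213.M (d 0 - w (min (d 1) B)) (d 1 - min (d 1) B)
            * Cor213.M (w (min (d 1) B)) (min (d 1) B) := by
        rw [M_mul]
        have e1 : d 0 - w (min (d 1) B) + w (min (d 1) B) = d 0 := by omega
        have e2 : d 1 - min (d 1) B + min (d 1) B = d 1 := by omega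
        rw [e1, e2, Cor213.M, ← eq_E d]
      rw [hkey]
      refine Ideal.mul_mem_left _ _ (Ideal.subset_span ?_)
      exact ⟨⟨min (d 1) B, by omega⟩, rfl⟩
    · rw [Ideal.span_le]
      rintro x ⟨i, rfl⟩
      exact hw_mem (i : ℕ)
  -- the staircase sets
  set Δ : Set (ℕ × ℕ) := {β | β.1 < w β.2} with hΔdef
  have hmemΔ : ∀ β : ℕ × ℕ, Cor213.M β.1 β.2 ∉ J ↔ β ∈ Δ := by
    intro β
    rw [mem_iff_w_le hA, ← hwdef]
    simp only [hΔdef, Set.mem_setOf_eq]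
    omega
  have hΔfin : Δ.Finite := by
    apply Set.Finite.subset ((Set.finite_Iio (w 0)).prod (Set.finite_Iio B))
    rintro ⟨a, b⟩ hab
    simp only [hΔdef, Set.mem_setOf_eq] at hab
    constructor
    · have : w b ≤ w 0 := w_mono hanti (Nat.zero_le b)
      simp only [Set.mem_Iio]
      omega
    · simp only [Set.mem_Iio]
      by_contra hc
      push_neg at hc
      have : w b = 0 := w_zero hanti hwB hc
      omega
  set Tset : Set (ℕ × ℕ) := {β | Cor213.M β.1 β.2 ∉ J ∧ h ≤ β.2} with hTdef
  have hgoalset : {β : ℕ × ℕ |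
      (monomial (expOf β) (1 : ℂ) : MvPolynomial (Fin 2) ℂ) ∉ J ∧ h ≤ β.2} = Tset := rfl
  rw [hgoalset]
  set shiftT : Set (ℕ × ℕ) := {β | β.1 < w β.2 ∧ β.1 < w (β.2 + h)} with hSdef
  have hsub : shiftT ⊆ Δ := fun β hβ => hβ.1
  have himg : (fun β : ℕ × ℕ => (β.1, β.2 + h)) '' shiftT = Tset := by
    ext α
    constructor
    · rintro ⟨β, ⟨h1, h2⟩, rfl⟩
      refine ⟨?_, by show h ≤ β.2 + h; omega⟩
      show Cor213.M β.1 (β.2 + h) ∉ J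
      exact (hmemΔ (β.1, β.2 + h)).mpr h2
    · rintro ⟨hm, hh2⟩
      rw [hmemΔ] at hm
      simp only [hΔdef, Set.mem_setOf_eq] at hm
      have he : α.2 - h + h = α.2 := by omega
      refine ⟨(α.1, α.2 - h), ⟨?_, ?_⟩, ?_⟩
      · show α.1 < w (α.2 - h)
        have hmono : w α.2 ≤ w (α.2 - h) := w_mono hanti (by omega)
        omega
      · show α.1 < w (α.2 - h + h)
        rw [he]
        exact hm
      · show (α.1, α.2 - h + h) = α
        rw [he]
  have hinj : Set.InjOn (fun β : ℕ × ℕ => (β.1, β.2 + h)) shiftT := by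
    rintro ⟨a, b⟩ _ ⟨c, d⟩ _ he
    simp only [Prod.mk.injEq] at he
    exact Prod.ext he.1 (by omega)
  have hTcard : Tset.ncard = shiftT.ncard := by
    rw [← himg]
    exact Set.ncard_image_of_injOn hinj
  -- Δh
  set Δh : Set (ℕ × ℕ) := {β | β.1 < w β.2 ∧ ¬ β.1 < w (β.2 + h)} with hΔhdef
  have hΔheq : Δh = Δ \ shiftT := by
    ext β
    simp only [hΔhdef, hΔdef, hSdef, Set.mem_setOf_eq, Set.mem_diff]
    tauto
  have hΔhfin : Δh.Finite := hΔfin.subset (by rw [hΔheq]; exact Set.diff_subset)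
  have hΔhcard : Δh.ncard = Δ.ncard - shiftT.ncard := by
    rw [hΔheq]
    exact Set.ncard_diff hsub (hΔfin.subset hsub)
  have hshiftle : shiftT.ncard ≤ Δ.ncard := Set.ncard_le_ncard hsub hΔfin
  -- Δ.ncard ≤ l
  have hΔcard : Δ.ncard ≤ l := by
    have hli := li_classes hJ Δ (fun β hβ => (hmemΔ β).mpr hβ)
    haveI := hΔfin.fintype
    have hc := hli.fintype_card_le_finrank
    rw [hl] at hc
    rwa [Set.ncard_eq_toFinset_card', Set.toFinset_card]
  -- the quotient bound
  have hspan : Submodule.span ℂ (Vset J' w B h) = ⊤ :=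
    le_antisymm le_top (top_le_span hanti hwB hz)
  have hVfin : (Vset J' w B h).Finite := hΔhfin.image _
  haveI := hVfin.fintype
  have hQC : Module.finrank ℂ
      ((Fin B → Cor213.S ⧸ J') ⧸ LinearMap.range (Rc J' w B))
      ≤ Δh.ncard := by
    have h1 : Module.finrank ℂ
        ((Fin B → Cor213.S ⧸ J') ⧸ LinearMap.range (Rc J' w B))
        = Module.finrank ℂ (Submodule.span ℂ (Vset J' w B h)) := by
      rw [hspan, finrank_top]
    rw [h1]
    calc Module.finrank ℂ (Submodule.span ℂ (Vset J' w B h))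
        ≤ (Vset J' w B h).toFinset.card := finrank_span_le_card _
      _ = (Vset J' w B h).ncard := by rw [Set.ncard_eq_toFinset_card']
      _ ≤ Δh.ncard := Set.ncard_image_le hΔhfin
  -- dimension bookkeeping
  haveI : FiniteDimensional ℂ (MvPolynomial (Fin 2) ℂ ⧸ J') := hfl'
  have hpi : ∀ n : ℕ, Module.finrank ℂ (Fin n → Cor213.S ⧸ J') = n * l' := by
    intro n
    rw [Module.finrank_pi_fintype]
    simp only [Finset.sum_const, Finset.card_univ, Fintype.card_fin, smul_eq_mul]
    rw [hl']
  have e1 := LinearMap.finrank_range_add_finrank_ker (Rc J' w B)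
  have e2 := Submodule.finrank_quotient_add_finrank (LinearMap.range (Rc J' w B))
  -- the Hom evaluation
  have hev := ev_inj (J' := J') (B := B) hw_mem hgen
  have heq : Module.finrank ℂ (J →ₗ[MvPolynomial (Fin 2) ℂ] MvPolynomial (Fin 2) ℂ ⧸ J')
      = Module.finrank ℂ (LinearMap.range (ev (J' := J') (B := B) hw_mem)) :=
    LinearEquiv.finrank_eq (LinearEquiv.ofInjective _ hev)
  have hle2 : Module.finrank ℂ (LinearMap.range (ev (J' := J') (B := B) hw_mem))
      ≤ Module.finrank ℂ (LinearMap.ker (Rc J' w B)) :=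
    Submodule.finrank_mono (range_ev_le_ker hw_mem hanti)
  rw [hpi (B+1)] at e1
  rw [hpi B] at e2
  have hmul : (B+1) * l' = B * l' + l' := by ring
  rw [heq, hTcard]
  omega
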